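/- Let x ∈ ℝ^m, ℓ ∈ ℕ, ε ∈ (0,1], let x̃ be a minimum-error ℓ-simplification of x with Δ = d_dF(x,x̃) > 0, and define x' by rounding each entry of x up to the next multiple of εΔ. Then the number of distinct values of x' is O(ℓ/ε); concretely, every entry x_i lies in some interval [x̃_j − Δ, x̃_j + Δ], so x' has at most ℓ·(⌈2/ε⌉ + 2) distinct values. -/

import Mathlib

/-!
Every traversal of `[m] × [ℓ]` passes through row `i` at some column `j ∈ [1, ℓ]`, so
`Δ ≥ minⱼ |xᵢ - x̃ⱼ|`. Hence every entry of `x` lies in one of the `ℓ` intervals `[x̃ⱼ - Δ, x̃ⱼ + Δ]`,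
and rounding up to multiples of `εΔ` maps each such interval to at most `⌈2/ε⌉ + 1` values.
-/

open scoped Classical

/-- A single step of a traversal: increment first, second, or both coordinates by 1. -/
def IsStep (p q : ℕ × ℕ) : Prop :=
  (q.1 = p.1 + 1 ∧ q.2 = p.2) ∨ (q.1 = p.1 ∧ q.2 = p.2 + 1) ∨
    (q.1 = p.1 + 1 ∧ q.2 = p.2 + 1)

/-- A traversal of `[m] × [ℓ]`: a sequence of index pairs starting at `(1,1)`,
ending at `(m,ℓ)`, where consecutive pairs differ by a valid step. -/
def IsTraversal (m ℓ : ℕ) (T : List (ℕ × ℕ)) : Prop :=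
  T.head? = some (1, 1) ∧ T.getLast? = some (m, ℓ) ∧ T.Chain' IsStep

/-- The cost of a traversal: the maximum of `|x i - y j|` over pairs `(i,j)` in `T`. -/
noncomputable def travCost (x y : ℕ → ℝ) (T : List (ℕ × ℕ)) : ℝ :=
  (T.map (fun p => |x p.1 - y p.2|)).foldr max 0

/-- The discrete Fréchet distance between time series `x ∈ ℝ^m` and `y ∈ ℝ^ℓ`
(indexed by `1,…,m` and `1,…,ℓ` respectively). -/
noncomputable def dF (m ℓ : ℕ) (x y : ℕ → ℝ) : ℝ :=
  sInf {c | ∃ T, IsTraversal m ℓ T ∧ travCost x y T = c}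

lemma le_travCost {x y : ℕ → ℝ} {T : List (ℕ × ℕ)} {p : ℕ × ℕ} (hp : p ∈ T) :
    |x p.1 - y p.2| ≤ travCost x y T :=
  List.le_max_of_le' 0 (List.mem_map_of_mem hp) le_rfl

lemma IsStep.le {p q : ℕ × ℕ} (h : IsStep p q) : p ≤ q := by
  rcases h with ⟨h₁, h₂⟩ | ⟨h₁, h₂⟩ | ⟨h₁, h₂⟩ <;> exact ⟨by omega, by omega⟩

lemma IsStep.fst_le_succ {p q : ℕ × ℕ} (h : IsStep p q) : q.1 ≤ p.1 + 1 := by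
  rcases h with ⟨h₁, -⟩ | ⟨h₁, -⟩ | ⟨h₁, -⟩ <;> omega

lemma IsTraversal.snoc {m ℓ : ℕ} {T : List (ℕ × ℕ)} {q : ℕ × ℕ} (hT : IsTraversal m ℓ T)
    (hq : IsStep (m, ℓ) q) : IsTraversal q.1 q.2 (T ++ [q]) := by
  obtain ⟨hhead, hlast, hchain⟩ := hT
  refine ⟨by simp [List.head?_append, hhead], List.getLast?_concat, ?_⟩
  refine hchain.append (List.isChain_singleton q) ?_
  simp [hlast, hq]

lemma exists_isTraversal {m ℓ : ℕ} (hm : 1 ≤ m) (hℓ : 1 ≤ ℓ) : ∃ T, IsTraversal m ℓ T := by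
  induction m, hm using Nat.le_induction with
  | base =>
    induction ℓ, hℓ using Nat.le_induction with
    | base => exact ⟨[(1, 1)], rfl, rfl, List.isChain_singleton _⟩
    | succ ℓ _ ih =>
      obtain ⟨T, hT⟩ := ih
      exact ⟨_, hT.snoc (q := (1, ℓ + 1)) (Or.inr (Or.inl ⟨rfl, rfl⟩))⟩
  | succ m _ ih =>
    obtain ⟨T, hT⟩ := ih
    exact ⟨_, hT.snoc (q := (m + 1, ℓ)) (Or.inl ⟨rfl, rfl⟩)⟩

lemma IsTraversal.mem_bounds {m ℓ : ℕ} {T : List (ℕ × ℕ)} (hT : IsTraversal m ℓ T)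
    {p : ℕ × ℕ} (hp : p ∈ T) : (1, 1) ≤ p ∧ p ≤ (m, ℓ) := by
  obtain ⟨hhead, hlast, hchain⟩ := hT
  have hsorted : T.Pairwise (· ≤ ·) := (hchain.imp fun _ _ => IsStep.le).pairwise
  constructor
  · obtain ⟨rest, rfl⟩ := List.head?_eq_some_iff.1 hhead
    rcases List.mem_cons.1 hp with rfl | hp
    · exact le_rfl
    · exact List.rel_of_pairwise_cons hsorted hp
  · obtain ⟨init, rfl⟩ := List.getLast?_eq_some_iff.1 hlast
    rcases List.mem_append.1 hp with hp | hp
    · exact (List.pairwise_append.1 hsorted).2.2 p hp _ (List.mem_singleton_self _)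
    · rw [List.mem_singleton.1 hp]

lemma List.mem_of_isChain_le_succ {l : List ℕ} {a b i : ℕ}
    (hl : l.IsChain fun u v => v ≤ u + 1) (ha : l.head? = some a) (hb : l.getLast? = some b)
    (hai : a ≤ i) (hib : i ≤ b) : i ∈ l := by
  induction l generalizing a with
  | nil => simp at ha
  | cons u rest ih =>
    obtain rfl : u = a := by simpa using ha
    rcases hai.eq_or_lt with rfl | hlt
    · exact List.mem_cons_self
    cases rest with
    | nil => simp only [List.getLast?_singleton, Option.some.injEq] at hb; omega
    | cons v rest =>
      rw [List.isChain_cons_cons] at hl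
      rw [List.getLast?_cons_cons] at hb
      exact List.mem_cons_of_mem _ (ih hl.2 rfl hb (by omega))

lemma IsTraversal.exists_fst_eq {m ℓ : ℕ} {T : List (ℕ × ℕ)} (hT : IsTraversal m ℓ T) {i : ℕ}
    (hi : i ∈ Finset.Icc 1 m) : ∃ p ∈ T, p.1 = i := by
  obtain ⟨hhead, hlast, hchain⟩ := hT
  rw [Finset.mem_Icc] at hi
  have := List.mem_of_isChain_le_succ (l := T.map Prod.fst)
    (List.isChain_map_of_isChain _ (fun _ _ => IsStep.fst_le_succ) hchain)
    (by simp [hhead]) (by simp [List.getLast?_map, hlast]) hi.1 hi.2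
  simpa using this

lemma exists_abs_sub_le_dF {m ℓ i : ℕ} (hℓ : 1 ≤ ℓ) (hi : i ∈ Finset.Icc 1 m) (x y : ℕ → ℝ) :
    ∃ j ∈ Finset.Icc 1 ℓ, |x i - y j| ≤ dF m ℓ x y := by
  obtain ⟨j, hj, hmin⟩ := (Finset.Icc 1 ℓ).exists_min_image (fun j => |x i - y j|)
    ⟨1, Finset.mem_Icc.2 ⟨le_rfl, hℓ⟩⟩
  refine ⟨j, hj, ?_⟩
  obtain ⟨T₀, hT₀⟩ := exists_isTraversal ((Finset.mem_Icc.1 hi).1.trans (Finset.mem_Icc.1 hi).2) hℓ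
  refine le_csInf ⟨_, T₀, hT₀, rfl⟩ ?_
  rintro _ ⟨T, hT, rfl⟩
  obtain ⟨p, hpT, rfl⟩ := hT.exists_fst_eq hi
  obtain ⟨⟨-, h₁⟩, ⟨-, h₂⟩⟩ := hT.mem_bounds hpT
  exact (hmin p.2 (Finset.mem_Icc.2 ⟨h₁, h₂⟩)).trans (le_travCost hpT)

lemma ceil_div_mem_Icc_of_abs_sub_le {t c r e : ℝ} (he : 0 < e) (h : |t - c| ≤ r) :
    ⌈t / e⌉ ∈ Finset.Icc ⌈(c - r) / e⌉ ⌈(c + r) / e⌉ := by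
  rw [abs_sub_le_iff] at h
  exact Finset.mem_Icc.2 ⟨Int.ceil_le_ceil (by gcongr; linarith),
    Int.ceil_le_ceil (by gcongr; linarith)⟩

lemma card_Icc_ceil_div_le (c r : ℝ) {e : ℝ} (he : 0 < e) :
    (Finset.Icc ⌈(c - r) / e⌉ ⌈(c + r) / e⌉).card ≤ ⌈2 * r / e⌉₊ + 1 := by
  have hsplit : (c + r) / e = 2 * r / e + (c - r) / e := by field_simp; ring
  have hceil : ⌈(c + r) / e⌉ ≤ ⌈2 * r / e⌉ + ⌈(c - r) / e⌉ := hsplit ▸ Int.ceil_add_le _ _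
  have hnat : ⌈2 * r / e⌉ ≤ ⌈2 * r / e⌉₊ := Int.ceil_le.2 (by exact_mod_cast Nat.le_ceil _)
  rw [Int.card_Icc, Int.toNat_le]
  push_cast
  omega

lemma card_image_mul_ceil_div_le {ι κ : Type*} [DecidableEq ι] (s : Finset ι) (t : Finset κ)
    (x : ι → ℝ) (c : κ → ℝ) {r e : ℝ} (he : 0 < e)
    (hcover : ∀ i ∈ s, ∃ j ∈ t, |x i - c j| ≤ r) :
    (s.image fun i => e * ⌈x i / e⌉).card ≤ t.card * (⌈2 * r / e⌉₊ + 1) := by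
  have hsub : (s.image fun i => e * ⌈x i / e⌉) ⊆
      t.biUnion fun j => (Finset.Icc ⌈(c j - r) / e⌉ ⌈(c j + r) / e⌉).image fun k : ℤ => e * k := by
    intro v hv
    obtain ⟨i, hi, rfl⟩ := Finset.mem_image.1 hv
    obtain ⟨j, hj, hij⟩ := hcover i hi
    exact Finset.mem_biUnion.2
      ⟨j, hj, Finset.mem_image_of_mem _ (ceil_div_mem_Icc_of_abs_sub_le he hij)⟩
  refine (Finset.card_le_card hsub).trans (Finset.card_biUnion_le_card_mul _ _ _ fun j _ => ?_)
  exact Finset.card_image_le.trans (card_Icc_ceil_div_le _ _ he)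

theorem stmt6_general (m ℓ : ℕ) (hl : 1 ≤ ℓ) (ε : ℝ) (hε1 : 0 < ε)
    (x xt x' : ℕ → ℝ)
    (hΔ : 0 < dF m ℓ x xt)
    (hx' : ∀ i, 1 ≤ i → i ≤ m →
      x' i = ε * dF m ℓ x xt * ((⌈x i / (ε * dF m ℓ x xt)⌉ : ℤ) : ℝ)) :
    (∀ i, 1 ≤ i → i ≤ m → ∃ j, 1 ≤ j ∧ j ≤ ℓ ∧ |x i - xt j| ≤ dF m ℓ x xt) ∧
    ((Finset.Icc 1 m).image x').card ≤ ℓ * (⌈(2 : ℝ) / ε⌉₊ + 2) := by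
  set Δ := dF m ℓ x xt
  have hcover (i : ℕ) (hi : i ∈ Finset.Icc 1 m) : ∃ j ∈ Finset.Icc 1 ℓ, |x i - xt j| ≤ Δ :=
    exists_abs_sub_le_dF hl hi x xt
  refine ⟨fun i h₁ h₂ => ?_, ?_⟩
  · obtain ⟨j, hj, hij⟩ := hcover i (Finset.mem_Icc.2 ⟨h₁, h₂⟩)
    exact ⟨j, (Finset.mem_Icc.1 hj).1, (Finset.mem_Icc.1 hj).2, hij⟩
  have himage : (Finset.Icc 1 m).image x' =
      (Finset.Icc 1 m).image fun i => ε * Δ * ⌈x i / (ε * Δ)⌉ :=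
    Finset.image_congr fun i hi => hx' i (Finset.mem_Icc.1 hi).1 (Finset.mem_Icc.1 hi).2
  have hratio : 2 * Δ / (ε * Δ) = 2 / ε := by field_simp
  calc ((Finset.Icc 1 m).image x').card
      ≤ (Finset.Icc 1 ℓ).card * (⌈2 * Δ / (ε * Δ)⌉₊ + 1) :=
        himage ▸ card_image_mul_ceil_div_le _ _ x xt (mul_pos hε1 hΔ) hcover
    _ ≤ ℓ * (⌈(2 : ℝ) / ε⌉₊ + 2) := by
        rw [Nat.card_Icc, Nat.add_sub_cancel, hratio]
        exact Nat.mul_le_mul_left _ (by omega)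

/-- After rounding up to multiples of εΔ, each entry of `x` lies within Δ of some
entry of the simplification, and the rounded series has at most ℓ(⌈2/ε⌉+2)
distinct values. -/
theorem stmt6 (m ℓ : ℕ) (hm : 1 ≤ m) (hl : 1 ≤ ℓ) (ε : ℝ) (hε1 : 0 < ε) (hε2 : ε ≤ 1)
    (x xt x' : ℕ → ℝ)
    (hxt : ∀ y : ℕ → ℝ, dF m ℓ x xt ≤ dF m ℓ x y)
    (hΔ : 0 < dF m ℓ x xt)
    (hx' : ∀ i, 1 ≤ i → i ≤ m →
      x' i = ε * dF m ℓ x xt * ((⌈x i / (ε * dF m ℓ x xt)⌉ : ℤ) : ℝ)) :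
    (∀ i, 1 ≤ i → i ≤ m → ∃ j, 1 ≤ j ∧ j ≤ ℓ ∧ |x i - xt j| ≤ dF m ℓ x xt) ∧
    ((Finset.Icc 1 m).image x').card ≤ ℓ * (⌈(2 : ℝ) / ε⌉₊ + 2) :=
  stmt6_general m ℓ hl ε hε1 x xt x' hΔ hx'
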